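/- arXiv:2512.09968 — 2 statements merged into one kernel-verified Lean document; each statement's English description precedes it below -/
import Mathlib

section
/- Let (a_n) ⊆ [0,1], (s_n) ⊆ [0,∞), and (b_n) be sequences of reals, and L ∈ ℕ, L ≥ 1, an upper bound on (s_n). Assume Σ_{n=0}^∞ a_n diverges with rate of divergence θ, that s_{n+1} ≤ (1 - a_n)·s_n + a_n·b_n for all n ∈ ℕ, and that ψ : ℕ → ℕ satisfies: for all k, n ∈ ℕ with n ≥ ψ(k), b_n ≤ 1/(k+1). Then s_n → 0 with rate of convergence Σ(k) = θ(ψ(2k+1) + ⌈ln(2L(k+1))⌉) + 1. -/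
/-! Setting `c = 1/(2(k+1))`, from `N = ψ(2k+1)` on we have `b_n ≤ c`, so `t_n = s_n - c`
satisfies `t_{n+1} ≤ (1 - a_n) t_n`. Hence
`s_n ≤ c + L ∏_{N ≤ i < n} (1 - a_i) ≤ c + L exp(-∑_{N ≤ i < n} a_i)`.
Past `θ(N + M) + 1` the sum `∑_{N ≤ i < n} a_i` is at least `M = ⌈ln(2L(k+1))⌉`, since the
first `N` terms contribute at most `N`; then the exponential term is at most `c` as well. -/

open Finset Real

def IsRateOfDivergence (a : ℕ → ℝ) (θ : ℕ → ℕ) : Prop :=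
  ∀ n : ℕ, (n : ℝ) ≤ ∑ i ∈ range (θ n + 1), a i

namespace IsRateOfDivergence

variable {a : ℕ → ℝ} {θ : ℕ → ℕ}

theorem le_succ (h : IsRateOfDivergence a θ) (ha : ∀ n, a n ≤ 1) (m : ℕ) :
    m ≤ θ m + 1 := by
  have : (m : ℝ) ≤ θ m + 1 := by
    calc (m : ℝ) ≤ ∑ i ∈ range (θ m + 1), a i := h m
      _ ≤ ∑ _i ∈ range (θ m + 1), (1 : ℝ) := sum_le_sum fun i _ => ha i
      _ = θ m + 1 := by simp
  exact_mod_cast this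

theorem le_sum_Ico (h : IsRateOfDivergence a θ) (ha : ∀ n, a n ∈ Set.Icc (0 : ℝ) 1)
    {N M n : ℕ} (hn : θ (N + M) + 1 ≤ n) : (M : ℝ) ≤ ∑ i ∈ Ico N n, a i := by
  have hNn : N ≤ n := by have := h.le_succ (fun i => (ha i).2) (N + M); omega
  have hhead : ∑ i ∈ range N, a i ≤ N := by
    calc ∑ i ∈ range N, a i ≤ ∑ _i ∈ range N, (1 : ℝ) := sum_le_sum fun i _ => (ha i).2
      _ = N := by simp
  have hall : ((N + M : ℕ) : ℝ) ≤ ∑ i ∈ range n, a i :=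
    (h (N + M)).trans <| sum_le_sum_of_subset_of_nonneg (range_subset_range.2 hn)
      fun i _ _ => (ha i).1
  rw [← sum_range_add_sum_Ico _ hNn] at hall
  push_cast at hall
  linarith

end IsRateOfDivergence

theorem le_prod_Ico_mul_of_le_mul {t r : ℕ → ℝ} {N : ℕ} (hr : ∀ n, N ≤ n → 0 ≤ r n)
    (ht : ∀ n, N ≤ n → t (n + 1) ≤ r n * t n) {n : ℕ} (hn : N ≤ n) :
    t n ≤ (∏ i ∈ Ico N n, r i) * t N := by
  induction n, hn using Nat.le_induction with
  | base => simp
  | succ n hn ih =>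
    rw [prod_Ico_succ_top hn, mul_comm (∏ i ∈ Ico N n, r i), mul_assoc]
    exact (ht n hn).trans (mul_le_mul_of_nonneg_left ih (hr n hn))

theorem sub_le_prod_Ico_one_sub_mul {a b s : ℕ → ℝ} {c : ℝ} {N n : ℕ}
    (ha : ∀ n, a n ∈ Set.Icc (0 : ℝ) 1)
    (hrec : ∀ n, s (n + 1) ≤ (1 - a n) * s n + a n * b n)
    (hb : ∀ n, N ≤ n → b n ≤ c) (hn : N ≤ n) :
    s n - c ≤ (∏ i ∈ Ico N n, (1 - a i)) * (s N - c) := by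
  refine le_prod_Ico_mul_of_le_mul (t := fun m => s m - c)
    (fun m _ => sub_nonneg.2 (ha m).2) (fun m hm => ?_) hn
  have := mul_le_mul_of_nonneg_left (hb m hm) (ha m).1
  linarith [hrec m]

theorem prod_one_sub_le_exp_neg_sum {ι : Type*} (u : Finset ι) {a : ι → ℝ}
    (ha : ∀ i ∈ u, a i ≤ 1) : ∏ i ∈ u, (1 - a i) ≤ exp (-∑ i ∈ u, a i) := by
  rw [← sum_neg_distrib, exp_sum]
  exact prod_le_prod (fun i hi => sub_nonneg.2 (ha i hi)) fun i _ => one_sub_le_exp_neg _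

theorem exp_neg_le_inv_of_log_le {x y : ℝ} (hx : 0 < x) (h : log x ≤ y) :
    exp (-y) ≤ x⁻¹ := by
  rw [exp_neg]
  exact inv_anti₀ hx ((log_le_iff_le_exp hx).1 h)

/-- Quantitative Xu lemma, first form: if `s_{n+1} ≤ (1-a_n)s_n + a_n b_n` with
`(a_n) ⊆ [0,1]`, `∑ a_n` diverging with rate `θ`, `(s_n)` nonnegative bounded by `L ≥ 1`,
and `b_n ≤ 1/(k+1)` for `n ≥ ψ(k)`, then `s_n → 0` with rate of convergence
`Σ(k) = θ(ψ(2k+1) + ⌈ln(2L(k+1))⌉) + 1`. -/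
theorem xu_lemma_quantitative_bn (a b s : ℕ → ℝ) (L : ℕ) (hL : 1 ≤ L)
    (ha : ∀ n, a n ∈ Set.Icc (0 : ℝ) 1)
    (hs : ∀ n, 0 ≤ s n) (hsL : ∀ n, s n ≤ L)
    (θ : ℕ → ℕ) (hθ : ∀ n : ℕ, (n : ℝ) ≤ ∑ i ∈ Finset.range (θ n + 1), a i)
    (hrec : ∀ n, s (n + 1) ≤ (1 - a n) * s n + a n * b n)
    (ψ : ℕ → ℕ) (hψ : ∀ k n : ℕ, ψ k ≤ n → b n ≤ 1 / ((k : ℝ) + 1)) :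
    ∀ k n : ℕ, θ (ψ (2 * k + 1) + ⌈Real.log (2 * (L : ℝ) * ((k : ℝ) + 1))⌉₊) + 1 ≤ n →
      |s n| ≤ 1 / ((k : ℝ) + 1) := by
  intro k n hn
  have hθ' : IsRateOfDivergence a θ := hθ
  set N := ψ (2 * k + 1)
  set x : ℝ := 2 * L * (k + 1)
  set c : ℝ := 1 / (2 * ((k : ℝ) + 1))
  have hLpos : (0 : ℝ) < L := by exact_mod_cast hL
  have hNn : N ≤ n := by
    have := hθ'.le_succ (fun i => (ha i).2) (N + ⌈log x⌉₊)
    omega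
  have hb (m : ℕ) (hm : N ≤ m) : b m ≤ c := by
    have := hψ (2 * k + 1) m hm
    rwa [show ((2 * k + 1 : ℕ) : ℝ) + 1 = 2 * ((k : ℝ) + 1) by push_cast; ring] at this
  have hprod : ∏ i ∈ Ico N n, (1 - a i) ≤ x⁻¹ :=
    (prod_one_sub_le_exp_neg_sum _ fun i _ => (ha i).2).trans <| exp_neg_le_inv_of_log_le
      (by positivity) ((Nat.le_ceil _).trans (hθ'.le_sum_Ico ha hn))
  have hprod_nonneg : 0 ≤ ∏ i ∈ Ico N n, (1 - a i) :=
    prod_nonneg fun i _ => sub_nonneg.2 (ha i).2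
  have hdecay := sub_le_prod_Ico_one_sub_mul ha hrec hb hNn
  rw [abs_of_nonneg (hs n)]
  calc s n ≤ c + (∏ i ∈ Ico N n, (1 - a i)) * s N := by
        nlinarith [mul_nonneg hprod_nonneg (by positivity : 0 ≤ c)]
    _ ≤ c + x⁻¹ * L := by linarith [mul_le_mul hprod (hsL N) (hs N) (by positivity)]
    _ = 1 / ((k : ℝ) + 1) := by simp only [c, x]; field_simp; ring
end

section
/- In the genVAM setting in a real normed space, set J = 2⌈1/(1-α)⌉, α_n = 2/((1-α)(n+J)) and λ_n = (n+J)/(n+J-1) for all n ∈ ℕ, and assume (T_n) satisfies Res((λ_n), n, n+1) for all n ∈ ℕ. Then for all n ∈ ℕ: ‖x_{n+1} - x_n‖ ≤ 3·J·K_z/((1-α)(n+J)) and ‖x_n - T_n x_n‖ ≤ (3J+4)·K_z/((1-α)(n+J)). -/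
/-!
All iterates stay in `C ∩ closedBall z K`: this set is convex, and `f` and every `T n` map it
into itself because `‖f z - z‖ ≤ (1 - α) K` and `z` is a common fixed point. Hence every
difference among `x n`, `f (x n)`, `T n (x n)` is at most `2K`. Writing `x (n+2) - x (n+1)`
as a combination of `f (x (n+1)) - f (x n)`, `f (x n) - T n (x n)`,
`T (n+1) (x (n+1)) - T (n+1) (x n)` and `T (n+1) (x n) - T n (x n)` gives, for
`d n = ‖x (n+1) - x n‖` and `m = n + J`,
`d (n+1) ≤ (1 - 2/(m+1)) d n + (a n - a (n+1)) 2K + (1 - a (n+1)) 2K/m²`,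
the last term by the resolvent condition, since `|1 - λ_{n+1}/λ_n| = 1/m²`. The choice of `J`
gives `(1 - α) J ≥ 2`, hence `a n ≤ 1` and `J ≥ 2`, and with these the bound
`3JK/((1 - α) m)` passes from `n` to `n + 1`. The second estimate follows from
`x n - T n (x n) = (x n - x (n+1)) + a n (f (x n) - T n (x n))`.
-/

open Set Metric

section Iteration

variable {X : Type*} [NormedAddCommGroup X]

lemma norm_sub_le_two_mul_of_mem_closedBall {z u v : X} {r : ℝ}
    (hu : u ∈ closedBall z r) (hv : v ∈ closedBall z r) : ‖u - v‖ ≤ 2 * r := by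
  rw [mem_closedBall] at hu hv
  rw [← dist_eq_norm]
  linarith [dist_triangle_right u v z]

lemma mapsTo_inter_closedBall_of_contraction {C : Set X} {f : X → X} {α r : ℝ} {z : X}
    (hα : 0 ≤ α) (hfC : ∀ x ∈ C, f x ∈ C) (hf : ∀ x ∈ C, ∀ y ∈ C, ‖f x - f y‖ ≤ α * ‖x - y‖)
    (hz : z ∈ C) (hfz : ‖f z - z‖ ≤ (1 - α) * r) :
    MapsTo f (C ∩ closedBall z r) (C ∩ closedBall z r) := by
  rintro x ⟨hxC, hxz⟩
  rw [mem_closedBall_iff_norm] at hxz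
  refine ⟨hfC x hxC, mem_closedBall_iff_norm.2 ?_⟩
  calc ‖f x - z‖ ≤ ‖f x - f z‖ + ‖f z - z‖ := norm_sub_le_norm_sub_add_norm_sub _ _ _
    _ ≤ α * ‖x - z‖ + (1 - α) * r := add_le_add (hf x hxC z hz) hfz
    _ ≤ α * r + (1 - α) * r := by gcongr
    _ = r := by ring

lemma mem_of_convex_of_mapsTo [NormedSpace ℝ X] {D : Set X} (hD : Convex ℝ D)
    {F G : ℕ → X → X} {a : ℕ → ℝ} (hF : ∀ n, MapsTo (F n) D D) (hG : ∀ n, MapsTo (G n) D D)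
    (ha : ∀ n, a n ∈ Icc 0 1) {x : ℕ → X} (hx0 : x 0 ∈ D)
    (hx : ∀ n, x (n + 1) = a n • F n (x n) + (1 - a n) • G n (x n)) :
    ∀ n, x n ∈ D
  | 0 => hx0
  | n + 1 => by
    have hxn := mem_of_convex_of_mapsTo hD hF hG ha hx0 hx n
    rw [hx]
    exact hD (hF n hxn) (hG n hxn) (ha n).1 (sub_nonneg.2 (ha n).2) (add_sub_cancel _ _)

lemma norm_sub_le_of_halpern_steps [NormedSpace ℝ X] {f S T : X → X} {α a b B R : ℝ}
    {u v w : X} (hf : ‖f v - f u‖ ≤ α * ‖v - u‖) (hT : ‖T v - T u‖ ≤ ‖v - u‖)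
    (hb0 : 0 ≤ b) (hb1 : b ≤ 1) (hba : b ≤ a)
    (hfS : ‖f u - S u‖ ≤ B) (hTS : ‖T u - S u‖ ≤ R)
    (hv : v = a • f u + (1 - a) • S u) (hw : w = b • f v + (1 - b) • T v) :
    ‖w - v‖ ≤ (1 - (1 - α) * b) * ‖v - u‖ + (a - b) * B + (1 - b) * R := by
  have h1b : 0 ≤ 1 - b := sub_nonneg.2 hb1
  have hab : 0 ≤ a - b := sub_nonneg.2 hba
  have hsplit : w - v = b • (f v - f u) + (a - b) • (S u - f u) + (1 - b) • (T v - T u)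
      + (1 - b) • (T u - S u) := by
    rw [hw, hv]; module
  calc ‖w - v‖ ≤ b * ‖f v - f u‖ + (a - b) * ‖f u - S u‖ + (1 - b) * ‖T v - T u‖
        + (1 - b) * ‖T u - S u‖ := by
        rw [hsplit]
        refine norm_add₄_le.trans_eq ?_
        rw [norm_smul_of_nonneg hb0, norm_smul_of_nonneg hab, norm_smul_of_nonneg h1b,
          norm_smul_of_nonneg h1b, norm_sub_rev (S u)]
    _ ≤ b * (α * ‖v - u‖) + (a - b) * B + (1 - b) * ‖v - u‖ + (1 - b) * R := by gcongr
    _ = (1 - (1 - α) * b) * ‖v - u‖ + (a - b) * B + (1 - b) * R := by ring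

lemma norm_sub_le_of_eq_smul_add_one_sub_smul [NormedSpace ℝ X] {p q u v : X} {a : ℝ}
    (ha : 0 ≤ a) (hv : v = a • p + (1 - a) • q) : ‖u - q‖ ≤ ‖v - u‖ + a * ‖p - q‖ := by
  have hvq : v - q = a • (p - q) := by rw [hv]; module
  calc ‖u - q‖ ≤ ‖u - v‖ + ‖v - q‖ := norm_sub_le_norm_sub_add_norm_sub _ _ _
    _ = ‖v - u‖ + a * ‖p - q‖ := by rw [norm_sub_rev, hvq, norm_smul_of_nonneg ha]

end Iteration

section Rates

variable {c J K : ℝ}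

lemma two_div_mul_add_mem_Icc (hc0 : 0 < c) (hcJ : 2 ≤ c * J) (n : ℕ) :
    2 / (c * ((n : ℝ) + J)) ∈ Icc 0 1 := by
  have hcm : 2 ≤ c * ((n : ℝ) + J) := by nlinarith [(n.cast_nonneg : (0 : ℝ) ≤ n)]
  exact ⟨by positivity, (div_le_one (by linarith)).2 hcm⟩

lemma two_div_mul_succ_add_le (hc0 : 0 < c) (hcJ : 2 ≤ c * J) (n : ℕ) :
    2 / (c * (((n + 1 : ℕ) : ℝ) + J)) ≤ 2 / (c * ((n : ℝ) + J)) := by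
  have hcm : 2 ≤ c * ((n : ℝ) + J) := by nlinarith [(n.cast_nonneg : (0 : ℝ) ≤ n)]
  gcongr
  linarith

lemma recursion_rhs_le_three_mul_div (hc0 : 0 < c) (hc1 : c ≤ 1) (hJ : 2 ≤ J) {m : ℝ}
    (hm : 0 < m) (hK : 0 ≤ K) :
    (1 - c * (2 / (c * (m + 1)))) * (3 * J * K / (c * m))
      + (2 / (c * m) - 2 / (c * (m + 1))) * (2 * K)
      + (1 - 2 / (c * (m + 1))) * (1 / m ^ 2 * (2 * K)) ≤ 3 * J * K / (c * (m + 1)) := by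
  have hgap : 3 * J * K / (c * (m + 1)) - ((1 - c * (2 / (c * (m + 1)))) * (3 * J * K / (c * m))
      + (2 / (c * m) - 2 / (c * (m + 1))) * (2 * K)
      + (1 - 2 / (c * (m + 1))) * (1 / m ^ 2 * (2 * K)))
      = K * ((3 * J - 4) * m - 2 * c * (m + 1) + 4) / (c * m ^ 2 * (m + 1)) := by
    field_simp
    ring
  have hnum : 0 ≤ (3 * J - 4) * m - 2 * c * (m + 1) + 4 := by nlinarith
  rw [← sub_nonneg, hgap]
  positivity

lemma le_three_mul_div_of_recursive_le {a d : ℕ → ℝ} (hc0 : 0 < c) (hc1 : c ≤ 1) (hcJ : 2 ≤ c * J)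
    (hK : 0 ≤ K) (ha : ∀ n : ℕ, a n = 2 / (c * ((n : ℝ) + J))) (h0 : d 0 ≤ 2 * K)
    (hstep : ∀ n : ℕ, d (n + 1) ≤ (1 - c * a (n + 1)) * d n + (a n - a (n + 1)) * (2 * K)
      + (1 - a (n + 1)) * (1 / ((n : ℝ) + J) ^ 2 * (2 * K))) :
    ∀ n : ℕ, d n ≤ 3 * J * K / (c * ((n : ℝ) + J)) := by
  have hJ : 2 ≤ J := by
    have hJ0 : 0 < J := pos_of_mul_pos_right (by linarith : 0 < c * J) hc0.le
    nlinarith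
  intro n
  induction n with
  | zero =>
    rw [Nat.cast_zero, zero_add, le_div_iff₀ (by positivity)]
    have hKJ : 0 ≤ K * J := by positivity
    nlinarith [mul_le_mul_of_nonneg_right h0 (by linarith : (0 : ℝ) ≤ c * J),
      mul_nonneg hKJ (sub_nonneg.2 hc1)]
  | succ n ih =>
    have hm : 0 < (n : ℝ) + J := by positivity
    have hsucc : ((n + 1 : ℕ) : ℝ) + J = (n : ℝ) + J + 1 := by push_cast; ring
    have hstep' := hstep n
    rw [ha, ha, hsucc] at hstep'
    rw [hsucc]
    have hcontr : 0 ≤ 1 - c * (2 / (c * ((n : ℝ) + J + 1))) := by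
      rw [← mul_div_assoc, mul_div_mul_left _ _ hc0.ne', sub_nonneg, div_le_one (by positivity)]
      linarith [(n.cast_nonneg : (0 : ℝ) ≤ n)]
    calc d (n + 1)
        ≤ (1 - c * (2 / (c * ((n : ℝ) + J + 1)))) * (3 * J * K / (c * ((n : ℝ) + J)))
          + (2 / (c * ((n : ℝ) + J)) - 2 / (c * ((n : ℝ) + J + 1))) * (2 * K)
          + (1 - 2 / (c * ((n : ℝ) + J + 1))) * (1 / ((n : ℝ) + J) ^ 2 * (2 * K)) := by
          linarith [mul_le_mul_of_nonneg_left ih hcontr]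
      _ ≤ 3 * J * K / (c * ((n : ℝ) + J + 1)) := recursion_rhs_le_three_mul_div hc0 hc1 hJ hm hK

lemma two_le_mul_two_mul_natCeil_one_div (hc : 0 < c) : 2 ≤ c * (2 * ⌈1 / c⌉₊ : ℕ) := by
  have h := mul_le_mul_of_nonneg_left (Nat.le_ceil (1 / c)) hc.le
  rw [mul_one_div_cancel hc.ne'] at h
  push_cast
  linarith

lemma abs_one_sub_div_of_eq_div_sub_one {lam : ℕ → ℝ} (hJ : 1 < J)
    (hlam : ∀ n : ℕ, lam n = ((n : ℝ) + J) / ((n : ℝ) + J - 1)) (n : ℕ) :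
    |1 - lam (n + 1) / lam n| = 1 / ((n : ℝ) + J) ^ 2 := by
  have hm : 1 < (n : ℝ) + J := by linarith [(n.cast_nonneg : (0 : ℝ) ≤ n)]
  have hm' : ((n + 1 : ℕ) : ℝ) + J = (n : ℝ) + J + 1 := by push_cast; ring
  rw [hlam, hlam, hm', add_sub_cancel_right]
  generalize (n : ℝ) + J = m at hm ⊢
  have hm1 : m - 1 ≠ 0 := sub_ne_zero.2 hm.ne'
  have hkey : 1 - (m + 1) / m / (m / (m - 1)) = 1 / m ^ 2 := by
    field_simp
    ring
  rw [hkey, abs_of_nonneg (by positivity)]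

end Rates

theorem genVAM_linear_rates_general {X : Type*} [NormedAddCommGroup X] [NormedSpace ℝ X]
    (C : Set X) (hC : Convex ℝ C)
    (f : X → X) (α : ℝ) (hα0 : 0 ≤ α) (hα1 : α < 1)
    (hfC : ∀ x ∈ C, f x ∈ C)
    (hf : ∀ x ∈ C, ∀ y ∈ C, ‖f x - f y‖ ≤ α * ‖x - y‖)
    (T : ℕ → X → X) (hTC : ∀ n, ∀ x ∈ C, T n x ∈ C)
    (hT : ∀ n, ∀ x ∈ C, ∀ y ∈ C, ‖T n x - T n y‖ ≤ ‖x - y‖)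
    (z : X) (hz : z ∈ C) (hzfix : ∀ n, T n z = z)
    (J : ℕ) (hJ : J = 2 * ⌈1 / (1 - α)⌉₊)
    (a : ℕ → ℝ) (ha : ∀ n : ℕ, a n = 2 / ((1 - α) * ((n : ℝ) + J)))
    (lam : ℕ → ℝ) (hlamdef : ∀ n : ℕ, lam n = ((n : ℝ) + J) / ((n : ℝ) + J - 1))
    (x : ℕ → X) (hx0 : x 0 ∈ C)
    (hx : ∀ n, x (n + 1) = a n • f (x n) + (1 - a n) • T n (x n))
    (K : ℕ)
    (hK1 : ‖x 0 - z‖ ≤ K) (hK2 : ‖f z - z‖ / (1 - α) ≤ K)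
    (hRes : ∀ n : ℕ, ∀ y ∈ C, ‖T n y - T (n + 1) y‖ ≤ |1 - lam (n + 1) / lam n| * ‖y - T n y‖) :
    ∀ n : ℕ,
      ‖x (n + 1) - x n‖ ≤ 3 * (J : ℝ) * K / ((1 - α) * ((n : ℝ) + J)) ∧
      ‖x n - T n (x n)‖ ≤ (3 * (J : ℝ) + 4) * K / ((1 - α) * ((n : ℝ) + J)) := by
  have hc : 0 < 1 - α := sub_pos.2 hα1
  have hcJ : 2 ≤ (1 - α) * J := hJ ▸ two_le_mul_two_mul_natCeil_one_div hc
  have hJ2 : (2 : ℝ) ≤ J := by nlinarith [(J.cast_nonneg : (0 : ℝ) ≤ J)]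
  have hK0 : (0 : ℝ) ≤ K := (norm_nonneg _).trans hK1
  have ha01 (n : ℕ) : a n ∈ Icc 0 1 := ha n ▸ two_div_mul_add_mem_Icc hc hcJ n
  have ha_succ (n : ℕ) : a (n + 1) ≤ a n := ha n ▸ ha (n + 1) ▸ two_div_mul_succ_add_le hc hcJ n
  set D := C ∩ closedBall z K
  have hfD : MapsTo f D D := mapsTo_inter_closedBall_of_contraction hα0 hfC hf hz
    (by rwa [div_le_iff₀ hc, mul_comm] at hK2)
  have hTD (n : ℕ) : MapsTo (T n) D D := mapsTo_inter_closedBall_of_contraction zero_le_one (hTC n)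
    (by simpa using hT n) hz (by simp [hzfix])
  have hxD : ∀ n, x n ∈ D := mem_of_convex_of_mapsTo (hC.inter (convex_closedBall z K))
    (fun _ => hfD) hTD ha01 ⟨hx0, mem_closedBall_iff_norm.2 hK1⟩ hx
  have hxT (n : ℕ) : ‖x n - T n (x n)‖ ≤ 2 * K :=
    norm_sub_le_two_mul_of_mem_closedBall (hxD n).2 (hTD n (hxD n)).2
  have hfT (n : ℕ) : ‖f (x n) - T n (x n)‖ ≤ 2 * K :=
    norm_sub_le_two_mul_of_mem_closedBall (hfD (hxD n)).2 (hTD n (hxD n)).2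
  have hres (n : ℕ) : ‖T (n + 1) (x n) - T n (x n)‖ ≤ 1 / ((n : ℝ) + J) ^ 2 * (2 * K) := by
    rw [norm_sub_rev, ← abs_one_sub_div_of_eq_div_sub_one (by linarith) hlamdef n]
    exact (hRes n _ (hxD n).1).trans (by gcongr; exact hxT n)
  have hstep (n : ℕ) := norm_sub_le_of_halpern_steps (hf _ (hxD (n + 1)).1 _ (hxD n).1)
    (hT _ _ (hxD (n + 1)).1 _ (hxD n).1) (ha01 (n + 1)).1 (ha01 (n + 1)).2 (ha_succ n)
    (hfT n) (hres n) (hx n) (hx (n + 1))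
  have hrate := le_three_mul_div_of_recursive_le (d := fun n => ‖x (n + 1) - x n‖) hc
    (by linarith) hcJ hK0 ha (norm_sub_le_two_mul_of_mem_closedBall (hxD 1).2 (hxD 0).2) hstep
  refine fun n => ⟨hrate n, (norm_sub_le_of_eq_smul_add_one_sub_smul (ha01 n).1 (hx n)).trans ?_⟩
  calc _ ≤ 3 * J * K / ((1 - α) * ((n : ℝ) + J)) + a n * (2 * K) :=
        add_le_add (hrate n) (mul_le_mul_of_nonneg_left (hfT n) (ha01 n).1)
    _ = (3 * J + 4) * K / ((1 - α) * ((n : ℝ) + J)) := by rw [ha]; ring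

/-- Linear rates for the genVAM iteration with `J = 2⌈1/(1-α)⌉`,
`α_n = 2/((1-α)(n+J))` and `λ_n = (n+J)/(n+J-1)`: for all `n`,
`‖x_{n+1} - x_n‖ ≤ 3 J K_z/((1-α)(n+J))` and
`‖x_n - T_n x_n‖ ≤ (3J+4) K_z/((1-α)(n+J))`. -/
theorem genVAM_linear_rates {X : Type*} [NormedAddCommGroup X] [NormedSpace ℝ X]
    (C : Set X) (hCne : C.Nonempty) (hC : Convex ℝ C)
    (f : X → X) (α : ℝ) (hα0 : 0 ≤ α) (hα1 : α < 1)
    (hfC : ∀ x ∈ C, f x ∈ C)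
    (hf : ∀ x ∈ C, ∀ y ∈ C, ‖f x - f y‖ ≤ α * ‖x - y‖)
    (T : ℕ → X → X) (hTC : ∀ n, ∀ x ∈ C, T n x ∈ C)
    (hT : ∀ n, ∀ x ∈ C, ∀ y ∈ C, ‖T n x - T n y‖ ≤ ‖x - y‖)
    (z : X) (hz : z ∈ C) (hzfix : ∀ n, T n z = z)
    (J : ℕ) (hJ : J = 2 * ⌈1 / (1 - α)⌉₊)
    (a : ℕ → ℝ) (ha : ∀ n : ℕ, a n = 2 / ((1 - α) * ((n : ℝ) + J)))
    (lam : ℕ → ℝ) (hlamdef : ∀ n : ℕ, lam n = ((n : ℝ) + J) / ((n : ℝ) + J - 1))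
    (x : ℕ → X) (hx0 : x 0 ∈ C)
    (hx : ∀ n, x (n + 1) = a n • f (x n) + (1 - a n) • T n (x n))
    (K : ℕ) (hK : 1 ≤ K)
    (hK1 : ‖x 0 - z‖ ≤ K) (hK2 : ‖f z - z‖ / (1 - α) ≤ K)
    (hRes : ∀ n : ℕ, ∀ y ∈ C, ‖T n y - T (n + 1) y‖ ≤ |1 - lam (n + 1) / lam n| * ‖y - T n y‖) :
    ∀ n : ℕ,
      ‖x (n + 1) - x n‖ ≤ 3 * (J : ℝ) * K / ((1 - α) * ((n : ℝ) + J)) ∧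
      ‖x n - T n (x n)‖ ≤ (3 * (J : ℝ) + 4) * K / ((1 - α) * ((n : ℝ) + J)) :=
  genVAM_linear_rates_general C hC f α hα0 hα1 hfC hf T hTC hT z hz hzfix J hJ a ha lam hlamdef x
    hx0 hx K hK1 hK2 hRes
end
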